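/- arXiv:1108.3444 — 2 statements merged into one kernel-verified Lean document; each statement's English description precedes it below -/
import Mathlib

section
/- If G is a gap-critical graph, then G has no simplicial vertex (a vertex whose neighborhood induces a complete graph). -/
open SimpleGraph

/-- Independence number: maximum size of an independent (stable) set. -/
noncomputable def indepNum {V : Type*} [Fintype V] (G : SimpleGraph V) : ℕ :=
  sSup {n | ∃ s : Finset V, (s : Set V).Pairwise (fun a b => ¬ G.Adj a b) ∧ s.card = n}

/-- Clique cover number: minimum number of cliques covering all vertices. -/
noncomputable def cliqueCoverNum {V : Type*} [Fintype V] (G : SimpleGraph V) : ℕ :=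
  sInf {n | ∃ P : Finset (Finset V),
    (∀ c ∈ P, G.IsClique (c : Set V)) ∧ (∀ v : V, ∃ c ∈ P, v ∈ c) ∧ P.card = n}

/-- The (covering) gap of a graph: θ(G) - α(G). -/
noncomputable def gap {V : Type*} [Fintype V] (G : SimpleGraph V) : ℕ :=
  cliqueCoverNum G - _root_.indepNum G

/-- A graph is gap-critical if every proper induced subgraph has strictly smaller gap. -/
def GapCritical {V : Type*} [Fintype V] (G : SimpleGraph V) : Prop :=
  ∀ s : Finset V, s ≠ Finset.univ → gap (G.induce (s : Set V)) < gap G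

/-
Let `v` be simplicial and let `H` be the subgraph induced by the vertices outside the closed
neighbourhood `N[v]`. Since `N[v]` is a clique, a clique cover of `H` extends to one of `G` by
the single clique `N[v]`, so `θ(G) ≤ θ(H) + 1`; since `v` has no neighbour in `H`, a maximum
independent set of `H` extends by `v`, so `α(H) + 1 ≤ α(G)`. Hence `gap G ≤ gap H`, although
`H` is a proper induced subgraph.
-/

section

variable {V : Type*} [Fintype V] (G : SimpleGraph V)

theorem indepNum_eq_simpleGraph_indepNum : _root_.indepNum G = G.indepNum := by
  simp only [_root_.indepNum, SimpleGraph.indepNum, isNIndepSet_iff, isIndepSet_iff]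

theorem cliqueCoverNum_le_card {P : Finset (Finset V)} (hP : ∀ c ∈ P, G.IsClique (c : Set V))
    (hcover : ∀ v, ∃ c ∈ P, v ∈ c) : cliqueCoverNum G ≤ P.card :=
  Nat.sInf_le ⟨P, hP, hcover, rfl⟩

theorem exists_cliqueCover_card_eq_cliqueCoverNum :
    ∃ P : Finset (Finset V), (∀ c ∈ P, G.IsClique (c : Set V)) ∧ (∀ v, ∃ c ∈ P, v ∈ c) ∧
      P.card = cliqueCoverNum G := by
  classical
  apply Nat.sInf_mem (s := {n | ∃ P : Finset (Finset V),
    (∀ c ∈ P, G.IsClique (c : Set V)) ∧ (∀ v : V, ∃ c ∈ P, v ∈ c) ∧ P.card = n})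
  refine ⟨_, Finset.univ.image ({·}), ?_, fun v => ⟨{v}, by simp⟩, rfl⟩
  simp

theorem cliqueCoverNum_le_cliqueCoverNum_induce_add_one (s : Finset V)
    (hs : G.IsClique (s : Set V)ᶜ) :
    cliqueCoverNum G ≤ cliqueCoverNum (G.induce (s : Set V)) + 1 := by
  classical
  obtain ⟨P, hP, hcover, hcard⟩ := exists_cliqueCover_card_eq_cliqueCoverNum (G.induce (s : Set V))
  let Q := insert sᶜ (P.image (Finset.map (Function.Embedding.subtype _)))
  have hQ : ∀ c ∈ Q, G.IsClique (c : Set V) := by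
    simp only [Q, Finset.forall_mem_insert, Finset.forall_mem_image, Finset.coe_compl,
      Finset.coe_map, Function.Embedding.coe_subtype]
    exact ⟨hs, fun c hc => isClique_induce_iff.1 (hP c hc)⟩
  have hQcover : ∀ v, ∃ c ∈ Q, v ∈ c := by
    intro v
    by_cases hv : v ∈ s
    · obtain ⟨c, hc, hvc⟩ := hcover ⟨v, hv⟩
      exact ⟨_, Finset.mem_insert_of_mem (Finset.mem_image_of_mem _ hc),
        Finset.mem_map_of_mem _ hvc⟩
    · exact ⟨sᶜ, Finset.mem_insert_self _ _, Finset.mem_compl.2 hv⟩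
  calc cliqueCoverNum G ≤ Q.card := cliqueCoverNum_le_card G hQ hQcover
    _ ≤ P.card + 1 := (Finset.card_insert_le _ _).trans (by gcongr; exact Finset.card_image_le)
    _ = _ := by rw [hcard]

theorem indepNum_induce_add_one_le (s : Set V) {v : V} (hv : v ∉ s)
    (hvs : ∀ u ∈ s, ¬ G.Adj v u) : (G.induce s).indepNum + 1 ≤ G.indepNum := by
  classical
  obtain ⟨t, ht, hcard⟩ := (G.induce s).exists_isNIndepSet_indepNum
  let t' := insert v (t.map (Function.Embedding.subtype _))
  have hvt : v ∉ t.map (Function.Embedding.subtype _) := fun h => by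
    obtain ⟨u, -, rfl⟩ := Finset.mem_map.1 h
    exact hv u.2
  have hindep : G.IsIndepSet (t' : Set V) := by
    simp only [t', Finset.coe_insert, Finset.coe_map, Function.Embedding.coe_subtype]
    refine Set.pairwise_insert.2 ⟨Subtype.val_injective.injOn.pairwise_image.2 ht, ?_⟩
    rintro _ ⟨u, -, rfl⟩ -
    exact ⟨hvs u u.2, fun h => hvs u u.2 h.symm⟩
  calc (G.induce s).indepNum + 1 = t'.card := by
        rw [Finset.card_insert_of_notMem hvt, Finset.card_map, hcard]
    _ ≤ G.indepNum := hindep.card_le_indepNum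

theorem gap_le_gap_induce (s : Finset V) (hs : G.IsClique (s : Set V)ᶜ) {v : V} (hv : v ∉ s)
    (hvs : ∀ u ∈ s, ¬ G.Adj v u) : gap G ≤ gap (G.induce (s : Set V)) := by
  have hθ := cliqueCoverNum_le_cliqueCoverNum_induce_add_one G s hs
  have hα := indepNum_induce_add_one_le G s hv hvs
  rw [← indepNum_eq_simpleGraph_indepNum, ← indepNum_eq_simpleGraph_indepNum] at hα
  unfold gap
  omega

end

theorem gapCritical_no_simplicial {V : Type*} [Fintype V] (G : SimpleGraph V)
    (hG : GapCritical G) : ∀ v : V, ¬ G.IsClique (G.neighborSet v) := by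
  intro v hv
  classical
  let s : Finset V := {u | u ≠ v ∧ ¬ G.Adj v u}
  have hv_notMem : v ∉ s := by simp [s]
  have hclosed : (s : Set V)ᶜ = insert v (G.neighborSet v) := by
    ext u
    simp [s, or_iff_not_imp_left]
  have hclique : G.IsClique (s : Set V)ᶜ := hclosed ▸ hv.insert fun _ hu _ => hu
  have hnonadj : ∀ u ∈ s, ¬ G.Adj v u := fun u hu => (Finset.mem_filter.1 hu).2.2
  have hproper : s ≠ Finset.univ := fun h => hv_notMem (h ▸ Finset.mem_univ v)
  exact (hG s hproper).not_ge (gap_le_gap_induce G s hclique hv_notMem hnonadj)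
end

section
/- Let G be a graph with gap(G) = t on n vertices. Then n ≥ 2t + α₂(2t), where α₂(m) is the minimum independence number over triangle-free graphs on m vertices; in particular s(t) ≥ 2t. -/
open SimpleGraph

/-- α₂(n): minimum independence number over triangle-free graphs on n vertices. -/
noncomputable def alphaN (n : ℕ) : ℕ :=
  sInf {k | ∃ G : SimpleGraph (Fin n), G.CliqueFree 3 ∧ _root_.indepNum G = k}

/-- s(t): smallest number of vertices of a graph with gap t. -/
noncomputable def sFun (t : ℕ) : ℕ :=
  sInf {n | ∃ G : SimpleGraph (Fin n), gap G = t}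

/-!
Greedily delete vertex-disjoint triangles from `G`, say `k` of them, until a triangle-free
induced subgraph `H` on `m` vertices remains, so that `n = 3k + m`, `θ(G) ≤ θ(H) + k` and
`α(H) ≤ α(G)`. Greedily deleting the edges of a matching from any graph `H` shows
`2 θ(H) ≤ m + α(H)`. Together these give `2t ≤ m + 2k - α(H)`, while adding `k` disjoint edges
to `H` gives `α₂(2t) ≤ α₂(m + 2k) ≤ α(H) + k`; adding the two bounds yields `2t + α₂(2t) ≤ n`.

Disjoint unions of 5-cycles show that every gap `t` is attained, so `s(t)` is an honest minimum.
-/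

universe u

open Finset

variable {V W : Type*}

lemma isClique_map_embedding {G : SimpleGraph V} {H : SimpleGraph W} (f : G ↪g H) {c : Finset V}
    (hc : G.IsClique (c : Set V)) :
    H.IsClique (c.map f.toEmbedding : Set W) := by
  rw [coe_map]
  rintro _ ⟨a, ha, rfl⟩ _ ⟨b, hb, rfl⟩ hne
  exact f.map_adj_iff.mpr (hc ha hb (ne_of_apply_ne _ hne))

variable [Fintype V] [Fintype W] {G : SimpleGraph V} {H : SimpleGraph W}

lemma bddAbove_card_isIndepSet (G : SimpleGraph V) :
    BddAbove {n | ∃ s : Finset V, G.IsIndepSet (s : Set V) ∧ s.card = n} :=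
  ⟨Fintype.card V, by rintro n ⟨s, -, rfl⟩; exact s.card_le_univ⟩

lemma card_le_indepNum {s : Finset V} (hs : G.IsIndepSet (s : Set V)) :
    s.card ≤ _root_.indepNum G :=
  le_csSup (bddAbove_card_isIndepSet G) ⟨s, hs, rfl⟩

lemma exists_isIndepSet_card_eq_indepNum (G : SimpleGraph V) :
    ∃ s : Finset V, G.IsIndepSet (s : Set V) ∧ s.card = _root_.indepNum G :=
  Nat.sSup_mem (⟨0, ∅, by simp, rfl⟩ :
    {n | ∃ s : Finset V, G.IsIndepSet (s : Set V) ∧ s.card = n}.Nonempty)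
    (bddAbove_card_isIndepSet G)

lemma indepNum_le_of_embedding (f : G ↪g H) : _root_.indepNum G ≤ _root_.indepNum H := by
  obtain ⟨s, hs, hcard⟩ := exists_isIndepSet_card_eq_indepNum G
  rw [← hcard, ← s.card_map f.toEmbedding]
  refine card_le_indepNum ?_
  rw [coe_map]
  rintro _ ⟨a, ha, rfl⟩ _ ⟨b, hb, rfl⟩ hne hadj
  exact hs ha hb (ne_of_apply_ne _ hne) (f.map_adj_iff.mp hadj)

lemma indepNum_eq_of_iso (e : G ≃g H) : _root_.indepNum G = _root_.indepNum H :=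
  le_antisymm (indepNum_le_of_embedding e.toEmbedding)
    (indepNum_le_of_embedding e.symm.toEmbedding)

lemma indepNum_top_le_one : _root_.indepNum (⊤ : SimpleGraph V) ≤ 1 := by
  obtain ⟨s, hs, hcard⟩ := exists_isIndepSet_card_eq_indepNum (⊤ : SimpleGraph V)
  rw [← hcard, card_le_one]
  intro a ha b hb
  by_contra hne
  exact hs ha hb hne ((top_adj a b).mpr hne)

def IsCliqueCover (G : SimpleGraph V) (P : Finset (Finset V)) : Prop :=
  (∀ c ∈ P, G.IsClique (c : Set V)) ∧ ∀ v, ∃ c ∈ P, v ∈ c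

lemma IsCliqueCover.cliqueCoverNum_le {P : Finset (Finset V)} (hP : IsCliqueCover G P) :
    cliqueCoverNum G ≤ P.card :=
  Nat.sInf_le ⟨P, hP.1, hP.2, rfl⟩

lemma isCliqueCover_singletons [DecidableEq V] (G : SimpleGraph V) :
    IsCliqueCover G (univ.image fun v => ({v} : Finset V)) := by
  refine ⟨by simp, fun v => ⟨{v}, mem_image_of_mem _ (mem_univ v), mem_singleton_self v⟩⟩

lemma cliqueCoverNum_le_card_s17 (G : SimpleGraph V) : cliqueCoverNum G ≤ Fintype.card V := by
  classical
  exact (isCliqueCover_singletons G).cliqueCoverNum_le.trans card_image_le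

lemma exists_isCliqueCover_card_eq_cliqueCoverNum (G : SimpleGraph V) :
    ∃ P, IsCliqueCover G P ∧ P.card = cliqueCoverNum G := by
  classical
  have hP := isCliqueCover_singletons G
  obtain ⟨P, hcl, hcov, hcard⟩ := Nat.sInf_mem (⟨_, _, hP.1, hP.2, rfl⟩ :
    {n | ∃ P : Finset (Finset V), (∀ c ∈ P, G.IsClique (c : Set V)) ∧
      (∀ v : V, ∃ c ∈ P, v ∈ c) ∧ P.card = n}.Nonempty)
  exact ⟨P, ⟨hcl, hcov⟩, hcard⟩

lemma indepNum_le_cliqueCoverNum (G : SimpleGraph V) :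
    _root_.indepNum G ≤ cliqueCoverNum G := by
  obtain ⟨s, hs, hs_card⟩ := exists_isIndepSet_card_eq_indepNum G
  obtain ⟨P, hP, hP_card⟩ := exists_isCliqueCover_card_eq_cliqueCoverNum G
  rw [← hs_card, ← hP_card]
  choose f hfP hvf using hP.2
  -- an independent set meets every clique at most once
  refine card_le_card_of_injOn f (fun v _ => hfP v) fun a ha b hb hab => ?_
  by_contra hne
  exact hs ha hb hne (hP.1 _ (hfP a) (hvf a) (hab ▸ hvf b) hne)

lemma card_le_mul_cliqueCoverNum {w : ℕ}
    (hw : ∀ s : Finset V, G.IsClique (s : Set V) → s.card ≤ w) :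
    Fintype.card V ≤ w * cliqueCoverNum G := by
  classical
  obtain ⟨P, hP, hP_card⟩ := exists_isCliqueCover_card_eq_cliqueCoverNum G
  rw [← hP_card]
  calc Fintype.card V = (univ : Finset V).card := card_univ.symm
    _ ≤ (P.biUnion id).card := card_le_card fun v _ => by
      obtain ⟨c, hc, hv⟩ := hP.2 v
      exact mem_biUnion.mpr ⟨c, hc, hv⟩
    _ ≤ ∑ c ∈ P, c.card := card_biUnion_le
    _ ≤ P.card • w := sum_le_card_nsmul _ _ _ fun c hc => hw c (hP.1 c hc)
    _ = w * P.card := by rw [smul_eq_mul, mul_comm]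

lemma cliqueCoverNum_le_card_of_forall_exists_mem {V W : Type*} [Fintype V] {G : SimpleGraph V}
    {H : SimpleGraph W} (f : G ↪g H) {P : Finset (Finset W)}
    (hP : ∀ c ∈ P, H.IsClique (c : Set W)) (hcov : ∀ v, ∃ c ∈ P, f v ∈ c) :
    cliqueCoverNum G ≤ P.card := by
  classical
  refine le_trans (IsCliqueCover.cliqueCoverNum_le
    (P := P.image fun c => c.preimage f f.injective.injOn) ⟨?_, fun v => ?_⟩) card_image_le
  · simp only [mem_image]
    rintro _ ⟨c, hc, rfl⟩ a ha b hb hne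
    exact f.map_adj_iff.mp
      (hP c hc (mem_preimage.mp ha) (mem_preimage.mp hb) (f.injective.ne hne))
  · obtain ⟨c, hc, hv⟩ := hcov v
    exact ⟨_, mem_image_of_mem _ hc, mem_preimage.mpr hv⟩

lemma cliqueCoverNum_le_of_embedding (f : G ↪g H) : cliqueCoverNum G ≤ cliqueCoverNum H := by
  obtain ⟨P, hP, hP_card⟩ := exists_isCliqueCover_card_eq_cliqueCoverNum H
  exact hP_card ▸ cliqueCoverNum_le_card_of_forall_exists_mem f hP.1 fun v => hP.2 (f v)

lemma cliqueCoverNum_eq_of_iso (e : G ≃g H) : cliqueCoverNum G = cliqueCoverNum H :=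
  le_antisymm (cliqueCoverNum_le_of_embedding e.toEmbedding)
    (cliqueCoverNum_le_of_embedding e.symm.toEmbedding)

lemma cliqueCoverNum_le_add_card (f : G ↪g H) {Q : Finset (Finset W)}
    (hQ : ∀ c ∈ Q, H.IsClique (c : Set W)) (hcov : ∀ w, w ∈ Set.range f ∨ ∃ c ∈ Q, w ∈ c) :
    cliqueCoverNum H ≤ cliqueCoverNum G + Q.card := by
  classical
  obtain ⟨P, hP, hP_card⟩ := exists_isCliqueCover_card_eq_cliqueCoverNum G
  rw [← hP_card]
  have hcover : IsCliqueCover H (P.image (map f.toEmbedding) ∪ Q) := by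
    refine ⟨fun c hc => ?_, fun w => ?_⟩
    · rcases mem_union.mp hc with hc | hc
      · obtain ⟨c₀, hc₀, rfl⟩ := mem_image.mp hc
        exact isClique_map_embedding f (hP.1 c₀ hc₀)
      · exact hQ c hc
    · rcases hcov w with ⟨v, rfl⟩ | ⟨c, hc, hw⟩
      · obtain ⟨c, hc, hv⟩ := hP.2 v
        exact ⟨_, mem_union_left _ (mem_image_of_mem _ hc), mem_map_of_mem _ hv⟩
      · exact ⟨c, mem_union_right _ hc, hw⟩
  calc cliqueCoverNum H ≤ (P.image (map f.toEmbedding) ∪ Q).card := hcover.cliqueCoverNum_le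
    _ ≤ P.card + Q.card := (card_union_le _ _).trans (Nat.add_le_add_right card_image_le _)

lemma exists_remainder_of_isClique {V : Type u} [Fintype V] {G : SimpleGraph V}
    {s : Finset V} (hs : G.IsClique (s : Set V)) :
    ∃ (W : Type u) (_ : Fintype W) (G' : SimpleGraph W),
      Fintype.card W + s.card = Fintype.card V ∧
      cliqueCoverNum G ≤ cliqueCoverNum G' + 1 ∧ _root_.indepNum G' ≤ _root_.indepNum G := by
  classical
  refine ⟨↥(s : Set V)ᶜ, inferInstance, G.induce (s : Set V)ᶜ, ?_, ?_,
    indepNum_le_of_embedding (Embedding.induce _)⟩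
  · rw [Fintype.card_compl_set]
    simp only [Finset.coe_sort_coe, Fintype.card_coe]
    have := s.card_le_univ
    omega
  · have := cliqueCoverNum_le_add_card (Embedding.induce (s : Set V)ᶜ) (Q := {s})
      (by simpa using hs) fun v => by
        by_cases hv : v ∈ s
        · exact .inr ⟨s, mem_singleton_self s, hv⟩
        · exact .inl ⟨⟨v, hv⟩, rfl⟩
    simpa using this

theorem two_mul_cliqueCoverNum_le_card_add_indepNum {V : Type u} [Fintype V] (G : SimpleGraph V) :
    2 * cliqueCoverNum G ≤ Fintype.card V + _root_.indepNum G := by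
  induction hn : Fintype.card V using Nat.strong_induction_on generalizing V with
  | _ n ih =>
  by_cases hE : ∃ x y, G.Adj x y
  · obtain ⟨x, y, hxy⟩ := hE
    classical
    obtain ⟨W, _, G', hcard, hθ, hα⟩ :=
      exists_remainder_of_isClique (s := {x, y}) (by simpa using (isClique_pair.mpr fun _ => hxy))
    rw [card_pair hxy.ne] at hcard
    have := ih (Fintype.card W) (by omega) G' rfl
    omega
  · simp only [not_exists] at hE
    have hα : Fintype.card V ≤ _root_.indepNum G := by
      simpa using card_le_indepNum (G := G) (s := univ) fun a _ b _ _ => hE a b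
    have := cliqueCoverNum_le_card_s17 G
    omega

theorem exists_cliqueFree_three_remainder {V : Type u} [Fintype V] (G : SimpleGraph V) :
    ∃ (W : Type u) (_ : Fintype W) (H : SimpleGraph W) (k : ℕ), H.CliqueFree 3 ∧
      Fintype.card V = Fintype.card W + 3 * k ∧
      cliqueCoverNum G ≤ cliqueCoverNum H + k ∧ _root_.indepNum H ≤ _root_.indepNum G := by
  induction hn : Fintype.card V using Nat.strong_induction_on generalizing V with
  | _ n ih =>
  by_cases hG : G.CliqueFree 3
  · exact ⟨V, inferInstance, G, 0, hG, hn.symm, le_rfl, le_rfl⟩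
  · obtain ⟨s, hs⟩ := not_forall_not.mp hG
    obtain ⟨W, _, G', hcard, hθ, hα⟩ := exists_remainder_of_isClique hs.isClique
    rw [hs.card_eq] at hcard
    obtain ⟨U, _, H, k, hH, hcard', hθ', hα'⟩ := ih (Fintype.card W) (by omega) G' rfl
    exact ⟨U, inferInstance, H, k + 1, hH, by omega, by omega, hα'.trans hα⟩

lemma indepNum_sum : _root_.indepNum (G ⊕g H) = _root_.indepNum G + _root_.indepNum H := by
  classical
  refine le_antisymm ?_ ?_
  · obtain ⟨u, hu, hu_card⟩ := exists_isIndepSet_card_eq_indepNum (G ⊕g H)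
    rw [← hu_card, ← card_toLeft_add_card_toRight]
    refine add_le_add (card_le_indepNum fun a ha b hb hne hadj => ?_)
      (card_le_indepNum fun a ha b hb hne hadj => ?_)
    · exact hu (mem_toLeft.mp ha) (mem_toLeft.mp hb) (by simpa using hne) (by simpa using hadj)
    · exact hu (mem_toRight.mp ha) (mem_toRight.mp hb) (by simpa using hne) (by simpa using hadj)
  · obtain ⟨s, hs, hs_card⟩ := exists_isIndepSet_card_eq_indepNum G
    obtain ⟨t, ht, ht_card⟩ := exists_isIndepSet_card_eq_indepNum H
    rw [← hs_card, ← ht_card, ← card_disjSum]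
    refine card_le_indepNum ?_
    rintro (a | a) ha (b | b) hb hne <;>
      simp only [mem_coe, inl_mem_disjSum, inr_mem_disjSum] at ha hb
    · simpa using hs ha hb (by simpa using hne)
    · simp
    · simp
    · simpa using ht ha hb (by simpa using hne)

lemma cliqueCoverNum_sum : cliqueCoverNum (G ⊕g H) = cliqueCoverNum G + cliqueCoverNum H := by
  classical
  refine le_antisymm ?_ ?_
  · obtain ⟨Q, hQ, hQ_card⟩ := exists_isCliqueCover_card_eq_cliqueCoverNum H
    have hθ := cliqueCoverNum_le_add_card (Embedding.sumInl : G ↪g G ⊕g H)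
      (Q := Q.image (map (Embedding.sumInr : H ↪g G ⊕g H).toEmbedding))
      (fun c hc => by
        obtain ⟨c₀, hc₀, rfl⟩ := mem_image.mp hc
        exact isClique_map_embedding _ (hQ.1 c₀ hc₀))
      (by
        rintro (v | w)
        · exact .inl ⟨v, rfl⟩
        · obtain ⟨c, hc, hw⟩ := hQ.2 w
          exact .inr ⟨_, mem_image_of_mem _ hc, mem_map_of_mem _ hw⟩)
    exact hθ.trans (Nat.add_le_add_left (hQ_card ▸ card_image_le) _)
  · obtain ⟨P, hP, hP_card⟩ := exists_isCliqueCover_card_eq_cliqueCoverNum (G ⊕g H)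
    set PG := P.filter fun c => ∃ v, Sum.inl v ∈ c
    set PH := P.filter fun c => ∃ w, Sum.inr w ∈ c
    -- no clique of `G ⊕g H` meets both sides
    have hdisj : Disjoint PG PH := by
      rw [disjoint_filter]
      rintro c hc ⟨v, hv⟩ ⟨w, hw⟩
      simpa using hP.1 c hc hv hw (by simp)
    have hG : cliqueCoverNum G ≤ PG.card :=
      cliqueCoverNum_le_card_of_forall_exists_mem (Embedding.sumInl : G ↪g G ⊕g H)
        (fun c hc => hP.1 c (mem_filter.mp hc).1) fun v => by
          obtain ⟨c, hc, hv⟩ := hP.2 (Sum.inl v)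
          exact ⟨c, mem_filter.mpr ⟨hc, v, hv⟩, hv⟩
    have hH : cliqueCoverNum H ≤ PH.card :=
      cliqueCoverNum_le_card_of_forall_exists_mem (Embedding.sumInr : H ↪g G ⊕g H)
        (fun c hc => hP.1 c (mem_filter.mp hc).1) fun w => by
          obtain ⟨c, hc, hw⟩ := hP.2 (Sum.inr w)
          exact ⟨c, mem_filter.mpr ⟨hc, w, hw⟩, hw⟩
    calc cliqueCoverNum G + cliqueCoverNum H ≤ PG.card + PH.card := add_le_add hG hH
      _ = (PG ∪ PH).card := (card_union_of_disjoint hdisj).symm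
      _ ≤ P.card := card_le_card (union_subset (filter_subset _ _) (filter_subset _ _))
      _ = cliqueCoverNum (G ⊕g H) := hP_card

lemma gap_sum : gap (G ⊕g H) = gap G + gap H := by
  have := indepNum_le_cliqueCoverNum G
  have := indepNum_le_cliqueCoverNum H
  unfold gap
  rw [cliqueCoverNum_sum, indepNum_sum]
  omega

lemma SimpleGraph.CliqueFree.sum {V W : Type*} {G : SimpleGraph V} {H : SimpleGraph W} {n : ℕ}
    (hG : G.CliqueFree n) (hH : H.CliqueFree n) :
    (G ⊕g H).CliqueFree n := by
  intro s hs
  have hcard := card_toLeft_add_card_toRight (u := s)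
  rw [hs.card_eq] at hcard
  by_cases hR : s.toRight = ∅
  · refine hG s.toLeft ⟨fun a ha b hb hne => ?_, by simpa [hR] using hcard⟩
    simpa using hs.isClique (mem_toLeft.mp ha) (mem_toLeft.mp hb) (by simpa using hne)
  · obtain ⟨w, hw⟩ := nonempty_iff_ne_empty.mpr hR
    have hL : s.toLeft = ∅ := eq_empty_of_forall_notMem fun v hv => by
      simpa using hs.isClique (mem_toLeft.mp hv) (mem_toRight.mp hw) (by simp)
    refine hH s.toRight ⟨fun a ha b hb hne => ?_, by simpa [hL] using hcard⟩
    simpa using hs.isClique (mem_toRight.mp ha) (mem_toRight.mp hb) (by simpa using hne)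

lemma indepNum_cycleGraph_five : _root_.indepNum (cycleGraph 5) = 2 := by
  obtain ⟨s, hs, hs_card⟩ := exists_isIndepSet_card_eq_indepNum (cycleGraph 5)
  have hle : ∀ s : Finset (Fin 5), (cycleGraph 5).IsIndepSet (s : Set (Fin 5)) → s.card ≤ 2 := by
    decide
  have hge := card_le_indepNum (G := cycleGraph 5) (s := {0, 2}) (by decide)
  rw [card_pair (by decide)] at hge
  exact le_antisymm (hs_card ▸ hle s hs) hge

lemma cliqueCoverNum_cycleGraph_five : cliqueCoverNum (cycleGraph 5) = 3 := by
  have hclique : ∀ s : Finset (Fin 5), (cycleGraph 5).IsClique (s : Set (Fin 5)) → s.card ≤ 2 := by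
    decide
  have hge := card_le_mul_cliqueCoverNum hclique
  have hle := two_mul_cliqueCoverNum_le_card_add_indepNum (cycleGraph 5)
  rw [indepNum_cycleGraph_five, Fintype.card_fin] at hle
  rw [Fintype.card_fin] at hge
  omega

lemma gap_cycleGraph_five : gap (cycleGraph 5) = 1 := by
  rw [gap, cliqueCoverNum_cycleGraph_five, indepNum_cycleGraph_five]

lemma gap_eq_of_iso (e : G ≃g H) : gap G = gap H := by
  rw [gap, gap, cliqueCoverNum_eq_of_iso e, indepNum_eq_of_iso e]

lemma exists_gap_eq (t : ℕ) : ∃ n, ∃ G : SimpleGraph (Fin n), gap G = t := by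
  induction t with
  | zero => exact ⟨0, ⊥, Nat.sub_eq_zero_of_le ((cliqueCoverNum_le_card_s17 _).trans (by simp))⟩
  | succ t ih =>
    obtain ⟨n, G, hG⟩ := ih
    have hcard : Fintype.card (Fin n ⊕ Fin 5) = n + 5 := by simp
    refine ⟨n + 5, (G ⊕g cycleGraph 5).overFin hcard, ?_⟩
    rw [← gap_eq_of_iso (overFinIso _ hcard), gap_sum, hG, gap_cycleGraph_five]

lemma exists_cliqueFree_three_indepNum_eq_alphaN (n : ℕ) :
    ∃ G : SimpleGraph (Fin n), G.CliqueFree 3 ∧ _root_.indepNum G = alphaN n :=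
  Nat.sInf_mem (s := {k | ∃ G : SimpleGraph (Fin n), G.CliqueFree 3 ∧ _root_.indepNum G = k})
    ⟨_, ⊥, cliqueFree_bot (by norm_num), rfl⟩

lemma alphaN_card_le_indepNum (hH : H.CliqueFree 3) :
    alphaN (Fintype.card W) ≤ _root_.indepNum H := by
  let e := H.overFinIso rfl
  exact Nat.sInf_le ⟨_, hH.comap ⟨e.symm.toEmbedding.toCopy⟩, (indepNum_eq_of_iso e).symm⟩

lemma alphaN_mono : Monotone alphaN := fun a b hab => by
  obtain ⟨G, hG, hα⟩ := exists_cliqueFree_three_indepNum_eq_alphaN b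
  let f := Embedding.comap (Fin.castLEEmb hab) G
  calc alphaN a = alphaN (Fintype.card (Fin a)) := by rw [Fintype.card_fin]
    _ ≤ _root_.indepNum (G.comap (Fin.castLEEmb hab)) :=
      alphaN_card_le_indepNum (hG.comap ⟨f.toCopy⟩)
    _ ≤ _root_.indepNum G := indepNum_le_of_embedding f
    _ = alphaN b := hα

lemma alphaN_add_two_le (n : ℕ) : alphaN (n + 2) ≤ alphaN n + 1 := by
  obtain ⟨G, hG, hα⟩ := exists_cliqueFree_three_indepNum_eq_alphaN n
  have hK : (⊤ : SimpleGraph (Fin 2)).CliqueFree 3 := cliqueFree_of_card_lt (by simp)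
  calc alphaN (n + 2) = alphaN (Fintype.card (Fin n ⊕ Fin 2)) := by simp
    _ ≤ _root_.indepNum (G ⊕g ⊤) := alphaN_card_le_indepNum (hG.sum hK)
    _ ≤ alphaN n + 1 := by
      rw [indepNum_sum, hα]
      exact Nat.add_le_add_left indepNum_top_le_one _

lemma alphaN_add_two_mul_le (n k : ℕ) : alphaN (n + 2 * k) ≤ alphaN n + k := by
  induction k with
  | zero => simp
  | succ k ih =>
    have := alphaN_add_two_le (n + 2 * k)
    rw [mul_add_one, ← add_assoc]
    omega

theorem two_mul_add_alphaN_le_card_of_gap_eq {V : Type u} [Fintype V] {G : SimpleGraph V} {t : ℕ}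
    (hG : gap G = t) : 2 * t + alphaN (2 * t) ≤ Fintype.card V := by
  obtain ⟨W, _, H, k, hH, hcard, hθ, hα⟩ := exists_cliqueFree_three_remainder G
  have h2θ := two_mul_cliqueCoverNum_le_card_add_indepNum H
  have hαθ := indepNum_le_cliqueCoverNum H
  have hαN := alphaN_card_le_indepNum hH
  unfold gap at hG
  have hαN_mono : alphaN (2 * t) ≤ alphaN (Fintype.card W + 2 * k) := alphaN_mono (by omega)
  have := alphaN_add_two_mul_le (Fintype.card W) k
  omega

theorem order_lower_bound_of_gap :
    (∀ (V : Type) [Fintype V] (G : SimpleGraph V) (t : ℕ),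
      gap G = t → 2 * t + alphaN (2 * t) ≤ Fintype.card V) ∧
    ∀ t : ℕ, 2 * t ≤ sFun t := by
  refine ⟨fun V _ G t hG => two_mul_add_alphaN_le_card_of_gap_eq hG, fun t => ?_⟩
  obtain ⟨G, hG⟩ : sFun t ∈ {n | ∃ G : SimpleGraph (Fin n), gap G = t} :=
    Nat.sInf_mem (exists_gap_eq t)
  have := two_mul_add_alphaN_le_card_of_gap_eq hG
  rw [Fintype.card_fin] at this
  omega
end
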